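/- arXiv:2408.08975 — 2 statements merged into one kernel-verified Lean document; each statement's English description precedes it below -/
import Mathlib

section
/- Let d ≥ 1 and let g ∈ L²(ℝ^d) be non-zero. Then V_g g(0) = ‖g‖²_{L²} (in particular V_g g(0) is a positive real number), and for every z ∈ ℝ^{2d} with z ≠ 0 the strict inequality |V_g g(z)| < V_g g(0) holds. -/
open MeasureTheory Real ComplexConjugate
noncomputable section

/-- Euclidean dot product. -/
def dotp {n : Type*} [Fintype n] (a b : n → ℝ) : ℝ := ∑ i, a i * b i

/-- Short-time Fourier transform `V_g f(x,ω) = ∫ f(t) conj(g(t-x)) e^{-2πi t·ω} dt`. -/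
def stft {d : ℕ} (g f : (Fin d → ℝ) → ℂ) (x ω : Fin d → ℝ) : ℂ :=
  ∫ t : Fin d → ℝ, f t * conj (g (t - x)) *
    Complex.exp (-(2 * π * Complex.I * (dotp t ω)))

open scoped InnerProductSpace ENNReal

lemma dotp_add_left {n : Type*} [Fintype n] (a b c : n → ℝ) :
    dotp (a + b) c = dotp a c + dotp b c := by
  simp [dotp, add_mul, Finset.sum_add_distrib]

lemma dotp_smul_left {n : Type*} [Fintype n] (r : ℝ) (a c : n → ℝ) :
    dotp (r • a) c = r * dotp a c := by
  simp [dotp, Finset.mul_sum, mul_assoc]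

lemma dotp_self_pos {n : Type*} [Fintype n] {a : n → ℝ} (ha : a ≠ 0) : 0 < dotp a a := by
  have h : ∃ i, a i ≠ 0 := by
    by_contra h; push_neg at h; exact ha (funext h)
  obtain ⟨i, hi⟩ := h
  have hpos : (0:ℝ) < a i * a i := mul_self_pos.mpr hi
  have : ∀ j ∈ Finset.univ, (0:ℝ) ≤ a j * a j := fun j _ => mul_self_nonneg _
  exact Finset.sum_pos' this ⟨i, Finset.mem_univ i, hpos⟩

lemma measurable_dotp {n : Type*} [Fintype n] (c : n → ℝ) :
    Measurable (fun t : n → ℝ => dotp t c) := by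
  unfold dotp
  exact Finset.measurable_sum _ fun i _ => (measurable_pi_apply i).mul_const _

lemma dotp_zero_right {n : Type*} [Fintype n] (a : n → ℝ) : dotp a 0 = 0 := by simp [dotp]

lemma dotp_sub_left {n : Type*} [Fintype n] (a b c : n → ℝ) :
    dotp (a - b) c = dotp a c - dotp b c := by
  have := dotp_add_left (a - b) b c
  simp at this
  linarith

lemma lintegral_eq_zero_of_ae_periodic {d : ℕ} (F : (Fin d → ℝ) → ℝ≥0∞) (hF : Measurable F)
    (x : Fin d → ℝ) (hx : x ≠ 0) (hper : ∀ᵐ t : Fin d → ℝ, F (t + x) = F t)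
    (hfin : ∫⁻ t, F t ≠ ⊤) : ∫⁻ t, F t = 0 := by
  set c : ℝ := dotp x x with hc
  have hcpos : 0 < c := dotp_self_pos hx
  have shift : ∀ v : Fin d → ℝ, ∀ᵐ t : Fin d → ℝ, F (t + v + x) = F (t + v) := by
    intro v
    exact (measurePreserving_add_right (volume : Measure (Fin d → ℝ)) v).quasiMeasurePreserving.ae_eq_comp
      (g := fun t => F (t + x)) (g' := F) hper
  have key : ∀ n : ℤ, ∀ᵐ t : Fin d → ℝ, F (t + (n:ℝ) • x) = F t := by
    intro n
    induction n using Int.induction_on with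
    | zero => simp
    | succ k ih =>
        have h1 := shift (((k:ℤ):ℝ) • x)
        filter_upwards [ih, h1] with t h2 h3
        have e : (((k:ℤ)+1 :ℝ)) • x = ((k:ℤ):ℝ) • x + x := by
          rw [add_smul, one_smul]
        have e2 : (((k:ℤ)+1 : ℤ):ℝ) = ((k:ℤ):ℝ)+1 := by push_cast; ring
        rw [e2, e, ← add_assoc, h3]
        exact h2
    | pred k ih =>
        have h1 := shift (((-(k:ℤ)-1:ℤ):ℝ) • x)
        filter_upwards [ih, h1] with t h2 h3
        have e : (((-(k:ℤ)-1:ℤ)):ℝ) • x + x = ((-(k:ℤ):ℤ):ℝ) • x := by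
          push_cast
          rw [sub_smul, one_smul, sub_add_cancel]
        rw [add_assoc, e] at h3
        rw [← h3]
        exact h2
  set S : ℤ → Set (Fin d → ℝ) := fun n => (fun t => dotp t x) ⁻¹' Set.Ico ((n:ℝ) * c) (((n:ℝ)+1) * c) with hS
  have hSmeas : ∀ n, MeasurableSet (S n) := fun n => (measurable_dotp x) measurableSet_Ico
  have hdisj' : ∀ m n : ℤ, m < n → Disjoint (S m) (S n) := by
    intro m n hmn
    refine Set.disjoint_left.mpr fun t htm htn => ?_
    have h1 : dotp t x < ((m:ℝ)+1) * c := htm.2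
    have h2 : (n:ℝ) * c ≤ dotp t x := htn.1
    have h3 : ((m:ℝ)+1) ≤ (n:ℝ) := by exact_mod_cast hmn
    nlinarith
  have hdisj : Pairwise (Function.onFun Disjoint S) := by
    intro m n hmn
    rcases hmn.lt_or_gt with h | h
    · exact hdisj' m n h
    · exact (hdisj' n m h).symm
  have hcover : (⋃ n : ℤ, S n) = Set.univ := by
    ext t
    simp only [Set.mem_iUnion, Set.mem_univ, iff_true]
    refine ⟨⌊dotp t x / c⌋, ?_, ?_⟩
    · have := Int.floor_le (dotp t x / c)
      calc ((⌊dotp t x / c⌋ : ℝ)) * c ≤ (dotp t x / c) * c :=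
            mul_le_mul_of_nonneg_right this hcpos.le
        _ = dotp t x := div_mul_cancel₀ _ hcpos.ne'
    · have := Int.lt_floor_add_one (dotp t x / c)
      calc dotp t x = (dotp t x / c) * c := (div_mul_cancel₀ _ hcpos.ne').symm
        _ < ((⌊dotp t x / c⌋ : ℝ) + 1) * c := by
            exact mul_lt_mul_of_pos_right this hcpos
  have slice : ∀ n : ℤ, ∫⁻ t in S n, F t = ∫⁻ t in S 0, F t := by
    intro n
    have hpre : (· + (n:ℝ) • x) ⁻¹' (S n) = S 0 := by
      ext t
      simp only [hS, Set.mem_preimage, dotp_add_left, dotp_smul_left, Set.mem_Ico, ← hc]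
      constructor
      · rintro ⟨ha, hb⟩
        constructor <;> [skip; skip] <;> push_cast at * <;> nlinarith
      · rintro ⟨ha, hb⟩
        constructor <;> push_cast at * <;> nlinarith
    calc ∫⁻ t in S n, F t
        = ∫⁻ t in (· + (n:ℝ) • x) ⁻¹' (S n), F (t + (n:ℝ) • x) :=
          ((measurePreserving_add_right volume ((n:ℝ) • x)).setLIntegral_comp_preimage
            (hSmeas n) hF).symm
      _ = ∫⁻ t in S 0, F (t + (n:ℝ) • x) := by rw [hpre]
      _ = ∫⁻ t in S 0, F t := lintegral_congr_ae (ae_restrict_of_ae (key n))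
  have total : ∫⁻ t, F t = ∑' n : ℤ, ∫⁻ t in S 0, F t := by
    rw [← setLIntegral_univ, ← hcover, lintegral_iUnion hSmeas hdisj]
    exact tsum_congr slice
  by_cases h0 : (∫⁻ t in S 0, F t) = 0
  · rw [total, h0, tsum_zero]
  · exfalso
    rw [total, ENNReal.tsum_const_eq_top_of_ne_zero h0] at hfin
    exact hfin rfl

lemma volume_hyperplane {d : ℕ} {ω : Fin d → ℝ} (hω : ω ≠ 0) (r : ℝ) :
    volume {t : Fin d → ℝ | dotp t ω = r} = 0 := by
  set L : (Fin d → ℝ) →ₗ[ℝ] ℝ :=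
    { toFun := fun t => dotp t ω
      map_add' := fun a b => dotp_add_left a b ω
      map_smul' := fun m a => dotp_smul_left m a ω } with hL
  have hker : LinearMap.ker L ≠ ⊤ := by
    intro h
    have : L ω = 0 := by
      have : ω ∈ LinearMap.ker L := by rw [h]; trivial
      exact this
    exact (dotp_self_pos hω).ne' this
  have hker0 : volume ((LinearMap.ker L : Submodule ℝ (Fin d → ℝ)) : Set (Fin d → ℝ)) = 0 :=
    Measure.addHaar_submodule volume _ hker
  set t₀ : Fin d → ℝ := (r / dotp ω ω) • ω with ht₀
  have ht₀r : dotp t₀ ω = r := by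
    rw [ht₀, dotp_smul_left, div_mul_cancel₀ _ (dotp_self_pos hω).ne']
  have hset : {t : Fin d → ℝ | dotp t ω = r} =
      (· - t₀) ⁻¹' ((LinearMap.ker L : Submodule ℝ (Fin d → ℝ)) : Set (Fin d → ℝ)) := by
    ext t
    simp only [Set.mem_setOf_eq, Set.mem_preimage, SetLike.mem_coe, LinearMap.mem_ker]
    show dotp t ω = r ↔ dotp (t - t₀) ω = 0
    rw [dotp_sub_left, ht₀r]
    constructor <;> intro h <;> linarith
  rw [hset]
  have hmeas : MeasurableSet ((LinearMap.ker L : Submodule ℝ (Fin d → ℝ)) : Set (Fin d → ℝ)) :=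
    (Submodule.closed_of_finiteDimensional _).measurableSet
  rw [(measurePreserving_sub_right volume t₀).measure_preimage hmeas.nullMeasurableSet]
  exact hker0

/-- for nonzero `g ∈ L²(ℝ^d)`, `V_g g(0) = ‖g‖²_{L²}` (a positive real)
and `|V_g g(z)| < V_g g(0)` for every `z = (x,ω) ≠ 0`. -/
theorem stmt3 (d : ℕ) (hd : 1 ≤ d) (g : (Fin d → ℝ) → ℂ)
    (hg : MemLp g 2 volume) (hg0 : ¬ g =ᵐ[volume] 0) :
    stft g g 0 0 = ((∫ t : Fin d → ℝ, ‖g t‖ ^ 2 : ℝ) : ℂ) ∧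
    (0 : ℝ) < ∫ t : Fin d → ℝ, ‖g t‖ ^ 2 ∧
    ∀ x ω : Fin d → ℝ, (x, ω) ≠ (0, 0) →
      ‖stft g g x ω‖ < ∫ t : Fin d → ℝ, ‖g t‖ ^ 2 := by
  classical
  have hint : ∀ z : ℂ, z * conj z = ((‖z‖ ^ 2 : ℝ) : ℂ) := fun z => by
    rw [Complex.mul_conj, Complex.normSq_eq_norm_sq]
  have part1 : stft g g 0 0 = ((∫ t : Fin d → ℝ, ‖g t‖ ^ 2 : ℝ) : ℂ) := by
    unfold stft
    simp only [sub_zero, dotp_zero_right, Complex.ofReal_zero, mul_zero, neg_zero,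
      Complex.exp_zero, mul_one, hint]
    exact integral_ofReal
  have hgint : Integrable (fun t => ‖g t‖ ^ 2) volume := by
    have h := hg.integrable_norm_rpow (by norm_num) (by norm_num)
    have : ENNReal.toReal 2 = 2 := by norm_num
    rw [this] at h
    convert h using 2 with t
    rw [← Real.rpow_natCast ‖g t‖ 2]
    norm_num
  have part2 : 0 < ∫ t : Fin d → ℝ, ‖g t‖ ^ 2 := by
    have hnn : 0 ≤ ∫ t : Fin d → ℝ, ‖g t‖ ^ 2 :=
      integral_nonneg fun t => sq_nonneg _
    rcases hnn.lt_or_eq with h | h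
    · exact h
    exfalso
    apply hg0
    have h0 := (integral_eq_zero_iff_of_nonneg (fun t => sq_nonneg ‖g t‖) hgint).mp h.symm
    filter_upwards [h0] with t ht
    have : ‖g t‖ ^ 2 = 0 := ht
    simpa using pow_eq_zero_iff (n := 2) (by norm_num) |>.mp this
  refine ⟨part1, part2, ?_⟩
  intro x ω hz
  set e : (Fin d → ℝ) → ℂ := fun t => Complex.exp (2 * π * Complex.I * (dotp t ω)) with he
  set k : (Fin d → ℝ) → ℂ := fun t => e t * g (t - x) with hk
  have hnorm_e : ∀ t, ‖e t‖ = 1 := fun t => by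
    have hre : (2 * (π:ℂ) * Complex.I * ((dotp t ω : ℝ):ℂ)).re = 0 := by simp
    rw [he]
    simp only [Complex.norm_exp, hre, Real.exp_zero]
  have hgx : MemLp (fun t : Fin d → ℝ => g (t - x)) 2 volume :=
    hg.comp_measurePreserving (measurePreserving_sub_right volume x)
  have hke : ∀ t, ‖k t‖ = ‖g (t - x)‖ := fun t => by
    rw [hk]; simp only [norm_mul, hnorm_e, one_mul]
  have hemeas : Measurable e := by
    apply Complex.measurable_exp.comp
    exact (Complex.measurable_ofReal.comp (measurable_dotp ω)).const_mul (2 * π * Complex.I)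
  have hkmeas : AEStronglyMeasurable k volume :=
    (hemeas.aestronglyMeasurable).mul hgx.1
  have hk2 : MemLp k 2 volume :=
    ⟨hkmeas, by
      rw [eLpNorm_congr_norm_ae (Filter.Eventually.of_forall hke)]
      exact hgx.2⟩
  set G : (Fin d → ℝ) →₂[volume] ℂ := hg.toLp g with hGdef
  set K : (Fin d → ℝ) →₂[volume] ℂ := hk2.toLp k with hKdef
  have hKG : ‖K‖ = ‖G‖ := by
    rw [hKdef, hGdef, Lp.norm_toLp, Lp.norm_toLp]
    congr 1
    rw [eLpNorm_congr_norm_ae (Filter.Eventually.of_forall hke)]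
    exact eLpNorm_comp_measurePreserving hg.1 (measurePreserving_sub_right volume x)
  have hconj_e : ∀ t, conj (e t) = Complex.exp (-(2 * π * Complex.I * (dotp t ω))) := by
    intro t
    rw [he, ← Complex.exp_conj]
    congr 1
    simp only [map_mul, map_neg, Complex.conj_I, Complex.conj_ofReal, map_ofNat]
    ring
  have hinner : stft g g x ω = ⟪K, G⟫_ℂ := by
    rw [MeasureTheory.L2.inner_def]
    unfold stft
    refine integral_congr_ae ?_
    filter_upwards [hk2.coeFn_toLp, hg.coeFn_toLp] with t h1 h2
    show g t * conj (g (t - x)) * Complex.exp (-(2 * π * Complex.I * (dotp t ω))) = ⟪K t, G t⟫_ℂ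
    rw [RCLike.inner_apply, h1, h2, hk, map_mul, hconj_e]
    ring
  have hG2 : (∫ t : Fin d → ℝ, ‖g t‖ ^ 2) = ‖G‖ ^ 2 := by
    have h1 : ⟪G, G⟫_ℂ = ((∫ t : Fin d → ℝ, ‖g t‖ ^ 2 : ℝ) : ℂ) := by
      rw [MeasureTheory.L2.inner_def]
      have : ∀ᵐ t : Fin d → ℝ, ⟪G t, G t⟫_ℂ = ((‖g t‖ ^ 2 : ℝ) : ℂ) := by
        filter_upwards [hg.coeFn_toLp] with t h1
        rw [RCLike.inner_apply, h1, ← hint, mul_comm]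
      rw [integral_congr_ae this]
      exact integral_ofReal
    have h2 : ⟪G, G⟫_ℂ = ((‖G‖ : ℂ)) ^ 2 := inner_self_eq_norm_sq_to_K G
    rw [h1] at h2
    exact_mod_cast h2
  have hG0 : G ≠ 0 := by
    intro h
    apply hg0
    have : hg.toLp g = (MemLp.zero : MemLp (0 : (Fin d → ℝ) → ℂ) 2 volume).toLp 0 := by
      rw [← hGdef, h, MemLp.toLp_zero]
    exact (MemLp.toLp_eq_toLp_iff hg MemLp.zero).mp this
  have hGn : 0 < ‖G‖ := norm_pos_iff.mpr hG0
  have hle : ‖stft g g x ω‖ ≤ ∫ t : Fin d → ℝ, ‖g t‖ ^ 2 := by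
    rw [hinner, hG2]
    calc ‖⟪K, G⟫_ℂ‖ ≤ ‖K‖ * ‖G‖ := norm_inner_le_norm K G
      _ = ‖G‖ ^ 2 := by rw [hKG]; ring
  rcases hle.lt_or_eq with h | heq
  · exact h
  exfalso
  have hK0 : K ≠ 0 := by
    intro h
    rw [h, norm_zero] at hKG
    exact hGn.ne' hKG.symm
  have heq2 : ‖⟪K, G⟫_ℂ‖ = ‖K‖ * ‖G‖ := by
    rw [← hinner, heq, hG2, hKG]; ring
  obtain ⟨r, hr0, hGK⟩ := (norm_inner_eq_norm_iff hK0 hG0).mp heq2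
  have hae : ∀ᵐ t : Fin d → ℝ, g t = r * k t := by
    have h1 : ⇑G =ᵐ[volume] ⇑(r • K) := by rw [hGK]
    filter_upwards [hg.coeFn_toLp, hk2.coeFn_toLp, h1, Lp.coeFn_smul r K] with t e1 e2 e3 e4
    rw [← e1, e3, e4]
    simp only [Pi.smul_apply, smul_eq_mul, hKdef, e2]
  have hrabs : ‖r‖ = 1 := by
    have h' : ‖G‖ = ‖r‖ * ‖K‖ := by rw [hGK, norm_smul]
    rw [hKG] at h'
    have h'' : (‖r‖ - 1) * ‖G‖ = 0 := by linarith
    rcases mul_eq_zero.mp h'' with h3 | h3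
    · linarith
    · exact absurd h3 hGn.ne'
  by_cases hx : x = 0
  · -- modulation case
    have hω : ω ≠ 0 := by
      intro h
      exact hz (by rw [hx, h])
    have hae2 : ∀ᵐ t : Fin d → ℝ, g t = r * e t * g t := by
      filter_upwards [hae] with t h
      rw [hk, hx] at h
      simpa [sub_zero, mul_assoc] using h
    have hrinv : ‖r⁻¹‖ = 1 := by
      rw [norm_inv]
      rw [hrabs]
      norm_num
    obtain ⟨θ, hθ⟩ := (Complex.norm_eq_one_iff _).mp hrinv
    set B : Set (Fin d → ℝ) := ⋃ n : ℤ, {t | dotp t ω = θ / (2 * π) + n} with hB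
    have hBnull : volume B = 0 := measure_iUnion_null fun n => volume_hyperplane hω _
    have hB' : ∀ᵐ t : Fin d → ℝ, t ∉ B := measure_eq_zero_iff_ae_notMem.mp hBnull
    have hzero : ∀ᵐ t : Fin d → ℝ, g t = 0 := by
      filter_upwards [hae2, hB'] with t h1 h2
      by_contra hgt
      have h3 : r * e t = 1 := by
        have h4 : (r * e t - 1) * g t = 0 := by linear_combination -h1
        rcases mul_eq_zero.mp h4 with h5 | h5
        · exact sub_eq_zero.mp h5
        · exact absurd h5 hgt
      have h4 : e t = r⁻¹ := eq_inv_of_mul_eq_one_right h3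
      rw [he, ← hθ] at h4
      obtain ⟨n, hn⟩ := Complex.exp_eq_exp_iff_exists_int.mp h4
      apply h2
      rw [hB]
      refine Set.mem_iUnion.mpr ⟨n, ?_⟩
      show dotp t ω = θ / (2 * π) + n
      have hπ : (π : ℝ) ≠ 0 := Real.pi_ne_zero
      have hc : (2 * (π:ℂ) * (dotp t ω : ℂ)) = (θ:ℂ) + (n:ℂ) * (2 * π) := by
        apply mul_right_cancel₀ Complex.I_ne_zero
        linear_combination hn
      have hcr : (2 * π * dotp t ω : ℝ) = θ + n * (2 * π) := by exact_mod_cast hc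
      field_simp
      linarith
    exact hg0 hzero
  · -- translation case
    have hper0 : ∀ᵐ t : Fin d → ℝ, ‖g (t - x)‖ = ‖g t‖ := by
      filter_upwards [hae] with t h
      rw [h, hk, norm_mul, norm_mul, hnorm_e, hrabs, one_mul, one_mul]
    set g' := hg.1.mk g with hg'def
    have hgg' : g =ᵐ[volume] g' := hg.1.ae_eq_mk
    have hg'meas : StronglyMeasurable g' := hg.1.stronglyMeasurable_mk
    have hgg'x : (fun t : Fin d → ℝ => g (t - x)) =ᵐ[volume] (fun t => g' (t - x)) :=
      (measurePreserving_sub_right volume x).quasiMeasurePreserving.ae_eq_comp hgg'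
    set F : (Fin d → ℝ) → ℝ≥0∞ := fun t => (‖g' t‖₊ : ℝ≥0∞) ^ (2:ℝ) with hF
    have hFmeas : Measurable F := by
      exact ENNReal.continuous_rpow_const.measurable.comp
        hg'meas.measurable.nnnorm.coe_nnreal_ennreal
    have hper : ∀ᵐ t : Fin d → ℝ, F (t + (-x)) = F t := by
      filter_upwards [hper0, hgg', hgg'x] with t h1 h2 h3
      have h4 : ‖g' (t - x)‖ = ‖g' t‖ := by rw [← h3, ← h2]; exact h1
      have h5 : ‖g' (t - x)‖₊ = ‖g' t‖₊ := NNReal.eq (by rw [coe_nnnorm, coe_nnnorm]; exact h4)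
      have h6 : t + (-x) = t - x := by abel
      rw [hF]
      simp only
      rw [h6, h5]
    have hg'2 : eLpNorm g' 2 volume < ⊤ := by
      rw [← eLpNorm_congr_ae hgg']
      exact hg.2
    have hfin : ∫⁻ t, F t ≠ ⊤ := by
      intro htop
      rw [eLpNorm_eq_lintegral_rpow_enorm_toReal (by norm_num) (by norm_num)] at hg'2
      have h2 : ENNReal.toReal 2 = 2 := by norm_num
      rw [h2] at hg'2
      rw [hF] at htop
      simp only at htop
      rw [show (∫⁻ (x : Fin d → ℝ), ‖g' x‖ₑ ^ (2:ℝ)) = ⊤ from htop] at hg'2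
      rw [ENNReal.top_rpow_of_pos (by norm_num)] at hg'2
      exact (lt_irrefl ⊤) hg'2
    have h0 := lintegral_eq_zero_of_ae_periodic F hFmeas (-x) (neg_ne_zero.mpr hx) hper hfin
    have hF0 : ∀ᵐ t : Fin d → ℝ, F t = 0 := (lintegral_eq_zero_iff hFmeas).mp h0
    apply hg0
    filter_upwards [hF0, hgg'] with t h1 h2
    rw [h2]
    rw [hF] at h1
    simp only [ENNReal.rpow_eq_zero_iff] at h1
    rcases h1 with ⟨h3, _⟩ | ⟨h3, _⟩
    · simpa using h3
    · exact absurd h3 (ENNReal.coe_ne_top)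
end
end

section
/- Let n ≥ 1 and let Δ = diag(d₁, …, dₙ) with dᵢ > 0 for all i. Then for every z ∈ ℝⁿ, ∑_{k ∈ ℤⁿ} e^{−π|Δk + z|²} ≥ ∑_{k ∈ ℤⁿ} e^{−π|Δ(k + w)|²}, where w = (1/2, …, 1/2); that is, the minimum over z ∈ ℝⁿ of the Gaussian periodization z ↦ ∑_{k ∈ ℤⁿ} e^{−π|Δk + z|²} is attained at the point Δ·(1/2, …, 1/2). -/
open Real
noncomputable section

namespace Stmt19Aux

lemma summable_gauss {c : ℝ} (hc : 0 < c) (t : ℝ) :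
    Summable fun k : ℤ => rexp (-c * ((k : ℝ) + t) ^ 2) := by
  have hT : 0 < c / π := div_pos hc pi_pos
  refine (summable_pow_mul_jacobiTheta₂_term_bound (c * |t| / π) hT 0).of_nonneg_of_le
    (fun k => (exp_pos _).le) (fun k => ?_)
  simp only [pow_zero, one_mul, exp_le_exp]
  have hπ : (0:ℝ) < π := pi_pos
  have h2 : -π * (c/π * (k:ℝ)^2 - 2*(c * |t| / π) * ((|k| : ℤ) : ℝ))
      = -c * (k:ℝ)^2 + 2*c * (|t| * |(k:ℝ)|) := by
    push_cast
    field_simp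
    ring
  rw [h2]
  have h1 : -((k:ℝ) * t) ≤ |(k:ℝ)| * |t| := by
    rw [← abs_mul]; exact neg_le_abs _
  nlinarith [mul_le_mul_of_nonneg_left h1 (by positivity : (0:ℝ) ≤ 2*c), sq_nonneg t, hc.le]

lemma sq_le_sinh_sq (u : ℝ) : u ^ 2 ≤ Real.sinh u ^ 2 := by
  rcases le_total 0 u with h | h
  · have h2 : u ≤ Real.sinh u := Real.self_le_sinh_iff.mpr h
    nlinarith
  · have h2 : Real.sinh u ≤ u := by
      have := Real.self_le_sinh_iff.mpr (neg_nonneg.mpr h)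
      rw [Real.sinh_neg] at this
      linarith
    nlinarith

lemma one_add_sq_half_le_cosh (x : ℝ) : 1 + x ^ 2 / 2 ≤ Real.cosh x := by
  have h : Real.cosh x = 2 * Real.sinh (x/2) ^ 2 + 1 := by
    have h2 := Real.cosh_two_mul (x/2)
    rw [show 2*(x/2) = x by ring] at h2
    rw [h2, Real.cosh_sq]; ring
  have := sq_le_sinh_sq (x/2)
  rw [h]; nlinarith

lemma exp_le_one_add_two_mul {y : ℝ} (h0 : 0 ≤ y) (h1 : y ≤ 1) : rexp y ≤ 1 + 2 * y := by
  have h := Real.exp_bound' h0 h1 (n := 2) (by norm_num)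
  simp [Finset.sum_range_succ] at h
  nlinarith [sq_nonneg y]

lemma exp_sq_le_cosh {c δ : ℝ} (hc : 4 ≤ c) (hδ : |δ| ≤ 1/2) :
    rexp (c * δ ^ 2) ≤ Real.cosh (c * δ) := by
  have hc0 : (0:ℝ) < c := by linarith
  have habs : c * δ ^ 2 = c * |δ| ^ 2 := by rw [sq_abs]
  rw [← Real.cosh_abs, abs_mul, abs_of_pos hc0, habs]
  set u := |δ| with hu
  have hu0 : 0 ≤ u := abs_nonneg _
  have hu2 : u ≤ 1/2 := hδ
  rcases le_total (c * u) 2 with h | h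
  · have hy0 : 0 ≤ c * u ^ 2 := by positivity
    have hy1 : c * u ^ 2 ≤ 1 := by nlinarith
    calc rexp (c * u ^ 2) ≤ 1 + 2 * (c * u ^ 2) := exp_le_one_add_two_mul hy0 hy1
      _ ≤ 1 + (c * u) ^ 2 / 2 := by nlinarith
      _ ≤ Real.cosh (c * u) := one_add_sq_half_le_cosh _
  · have hln : Real.log 2 ≤ 1 := by
      have := Real.log_le_sub_one_of_pos (by norm_num : (0:ℝ) < 2); linarith
    have hy : c * u ^ 2 ≤ c * u - Real.log 2 := by nlinarith
    calc rexp (c * u ^ 2) ≤ rexp (c * u - Real.log 2) := by exact Real.exp_le_exp.mpr hy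
      _ = rexp (c * u) / 2 := by rw [Real.exp_sub, Real.exp_log]; norm_num
      _ ≤ Real.cosh (c * u) := by
          rw [Real.cosh_eq]
          have := Real.exp_pos (-(c*u))
          linarith


/-- the involution `k ↦ -1-k` on ℤ -/
def negE : ℤ ≃ ℤ := ⟨fun k => -1-k, fun k => -1-k, fun k => by ring, fun k => by ring⟩

lemma spatial {c δ : ℝ} (hc : 4 ≤ c) (hδ : |δ| ≤ 1/2) :
    ∑' k : ℤ, rexp (-c * ((k:ℝ) + 1/2) ^ 2)
      ≤ ∑' k : ℤ, rexp (-c * ((k:ℝ) + (1/2 + δ)) ^ 2) := by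
  have hc0 : (0:ℝ) < c := by linarith
  set f : ℤ → ℝ := fun k => rexp (-c * ((k:ℝ) + (1/2 + δ)) ^ 2) with hf_def
  set g : ℤ → ℝ := fun k => rexp (-c * ((k:ℝ) + 1/2) ^ 2) with hg_def
  have hf : Summable f := summable_gauss hc0 _
  have hg : Summable g := summable_gauss hc0 _
  have hfe : Summable (f ∘ negE) := negE.summable_iff.mpr hf
  have hge : Summable (g ∘ negE) := negE.summable_iff.mpr hg
  -- symmetrization identities
  have sym : ∀ (h : ℤ → ℝ), Summable h → Summable (h ∘ negE) →
      ∑' k, h k = ∑' k, (h k + h (-1-k)) / 2 := by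
    intro h hs hse
    have h1 : ∑' k, (h ∘ negE) k = ∑' k, h k := negE.tsum_eq h
    have h2 : ∑' k, (h k + h (-1-k)) = ∑' k, h k + ∑' k, h (-1-k) := Summable.tsum_add hs hse
    have h3 : ∑' k, (h k + h (-1-k)) / 2 = (∑' k, (h k + h (-1-k))) / 2 := tsum_div_const
    rw [h3, h2]
    have : ∑' k, h (-1-k) = ∑' k, h k := h1
    rw [this]; ring
  rw [sym f hf hfe, sym g hg hge]
  refine Summable.tsum_le_tsum (fun k => ?_) ((hg.add hge).div_const 2) ((hf.add hfe).div_const 2)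
  -- termwise inequality
  have hgsym : g (-1-k) = g k := by
    simp only [hg_def]
    congr 1
    push_cast
    ring
  have hpair : f k + f (-1-k)
      = 2 * g k * (rexp (-c * δ^2) * Real.cosh (2*c*((k:ℝ)+1/2)*δ)) := by
    simp only [hf_def, hg_def, Real.cosh_eq]
    rw [show -c * ((k:ℝ) + (1/2 + δ))^2
        = (-c * ((k:ℝ)+1/2)^2) + (-c * δ^2) + (-(2*c*((k:ℝ)+1/2)*δ)) by ring]
    rw [show -c * (((-1-k : ℤ):ℝ) + (1/2 + δ))^2
        = (-c * ((k:ℝ)+1/2)^2) + (-c * δ^2) + (2*c*((k:ℝ)+1/2)*δ) by push_cast; ring]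
    rw [Real.exp_add, Real.exp_add, Real.exp_add, Real.exp_add]
    ring
  have hone : 1 ≤ rexp (-c * δ^2) * Real.cosh (2*c*((k:ℝ)+1/2)*δ) := by
    have hch : Real.cosh (c*δ) ≤ Real.cosh (2*c*((k:ℝ)+1/2)*δ) := by
      rw [Real.cosh_le_cosh]
      have h1 : (1:ℝ) ≤ |2*(k:ℝ)+1| := by
        have : (1:ℤ) ≤ |2*k+1| := by
          rcases le_or_gt 0 k with h | h
          · rw [abs_of_nonneg (by omega)]; omega
          · rw [abs_of_nonpos (by omega)]; omega
        calc (1:ℝ) = ((1:ℤ):ℝ) := by norm_num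
          _ ≤ ((|2*k+1| : ℤ) : ℝ) := by exact_mod_cast this
          _ = |2*(k:ℝ)+1| := by push_cast; rfl
      rw [show 2*c*((k:ℝ)+1/2)*δ = (c*δ) * (2*(k:ℝ)+1) by ring]
      calc |c*δ| = |c*δ| * 1 := (mul_one _).symm
        _ ≤ |c*δ| * |2*(k:ℝ)+1| := mul_le_mul_of_nonneg_left h1 (abs_nonneg _)
        _ = |c*δ*(2*(k:ℝ)+1)| := (abs_mul _ _).symm
    have hkey : rexp (c * δ^2) ≤ Real.cosh (c*δ) := exp_sq_le_cosh hc hδ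
    have he : rexp (-c*δ^2) * rexp (c*δ^2) = 1 := by
      rw [← Real.exp_add]; norm_num
    calc (1:ℝ) = rexp (-c*δ^2) * rexp (c*δ^2) := he.symm
      _ ≤ rexp (-c*δ^2) * Real.cosh (2*c*((k:ℝ)+1/2)*δ) := by
          have := (exp_pos (-c*δ^2)).le
          exact mul_le_mul_of_nonneg_left (hkey.trans hch) this
  have hgk : 0 ≤ g k := (exp_pos _).le
  rw [hgsym, hpair]
  nlinarith [mul_le_mul_of_nonneg_left hone (by positivity : (0:ℝ) ≤ 2 * g k)]


lemma poisson {d : ℝ} (hd : 0 < d) (t : ℝ) :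
    ∑' k : ℤ, rexp (-(π * d^2) * ((k:ℝ) + t)^2)
      = (1/d) * ∑' m : ℤ, rexp (-(π / d^2) * (m:ℝ)^2) * Real.cos (2*π*(m:ℝ)*t) := by
  have hd2 : (0:ℝ) < d^2 := by positivity
  have ha' : 0 < (((d^2)⁻¹ : ℝ) : ℂ).re := by rw [Complex.ofReal_re]; positivity
  have key := Complex.tsum_exp_neg_quadratic ha' (-Complex.I * (t:ℂ))
  set S : ℝ := ∑' k : ℤ, rexp (-(π * d^2) * ((k:ℝ) + t)^2) with hS
  -- rewrite RHS of key
  have hterm : ∀ n : ℤ,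
      Complex.exp (-(π:ℂ) / (((d^2)⁻¹ : ℝ):ℂ) * ((n:ℂ) + Complex.I * (-Complex.I * (t:ℂ)))^2)
      = ((rexp (-(π * d^2) * ((n:ℝ) + t)^2) : ℝ) : ℂ) := by
    intro n
    rw [Complex.ofReal_exp]
    congr 1
    have h1 : Complex.I * (-Complex.I * (t:ℂ)) = (t:ℂ) := by
      rw [← mul_assoc, mul_neg, Complex.I_mul_I]; ring
    rw [h1]
    push_cast
    have hd0 : (d:ℂ) ≠ 0 := by exact_mod_cast hd.ne'
    field_simp
  have hrhs : (∑' n : ℤ, Complex.exp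
      (-(π:ℂ) / (((d^2)⁻¹ : ℝ):ℂ) * ((n:ℂ) + Complex.I * (-Complex.I * (t:ℂ)))^2)) = ((S:ℝ):ℂ) := by
    rw [tsum_congr hterm, hS, Complex.ofReal_tsum]
  have hpow : (((d^2)⁻¹ : ℝ):ℂ) ^ (1/2 : ℂ) = ((d⁻¹ : ℝ):ℂ) := by
    have h2 : ((d^2)⁻¹ : ℝ) ^ ((1:ℝ)/2) = d⁻¹ := by
      rw [← Real.sqrt_eq_rpow, Real.sqrt_inv, Real.sqrt_sq hd.le]
    rw [show (1/2 : ℂ) = (((1:ℝ)/2 : ℝ) : ℂ) by norm_num,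
      ← Complex.ofReal_cpow (by positivity), h2]
  rw [hrhs, hpow] at key
  have hd0 : (d:ℂ) ≠ 0 := by exact_mod_cast hd.ne'
  have key2 : (∑' n : ℤ, Complex.exp (-(π:ℂ) * (((d^2)⁻¹ : ℝ):ℂ) * (n:ℂ)^2
      + 2*(π:ℂ)*(-Complex.I*(t:ℂ))*(n:ℂ))) = (d:ℂ) * ((S:ℝ):ℂ) := by
    rw [key]
    push_cast
    rw [one_div, inv_inv]
  -- exponent decomposition
  have hexp_eq : ∀ n : ℤ, (-(π:ℂ) * (((d^2)⁻¹ : ℝ):ℂ) * (n:ℂ)^2 + 2*(π:ℂ)*(-Complex.I*(t:ℂ))*(n:ℂ))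
      = ((-(π/d^2) * (n:ℝ)^2 : ℝ) : ℂ) + ((-(2*π*t*(n:ℝ)) : ℝ) : ℂ) * Complex.I := by
    intro n
    push_cast
    field_simp
  have hsum : Summable (fun n : ℤ => Complex.exp (-(π:ℂ) * (((d^2)⁻¹ : ℝ):ℂ) * (n:ℂ)^2
      + 2*(π:ℂ)*(-Complex.I*(t:ℂ))*(n:ℂ))) := by
    apply Summable.of_norm
    have hb : ∀ n : ℤ, ‖Complex.exp (-(π:ℂ) * (((d^2)⁻¹ : ℝ):ℂ) * (n:ℂ)^2
        + 2*(π:ℂ)*(-Complex.I*(t:ℂ))*(n:ℂ))‖ = rexp (-(π/d^2) * ((n:ℝ) + 0)^2) := by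
      intro n
      rw [hexp_eq n, Complex.norm_exp]
      congr 1
      simp only [Complex.add_re, Complex.ofReal_re, Complex.mul_re, Complex.ofReal_im,
        Complex.I_re, Complex.I_im, mul_zero, mul_one, zero_mul, sub_zero, add_zero]
    rw [funext hb]
    exact summable_gauss (by positivity) 0
  have hre := congrArg Complex.re key2
  rw [Complex.re_tsum hsum] at hre
  have hterm_re : ∀ n : ℤ, (Complex.exp (-(π:ℂ) * (((d^2)⁻¹ : ℝ):ℂ) * (n:ℂ)^2
      + 2*(π:ℂ)*(-Complex.I*(t:ℂ))*(n:ℂ))).re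
      = rexp (-(π/d^2) * (n:ℝ)^2) * Real.cos (2*π*(n:ℝ)*t) := by
    intro n
    rw [hexp_eq n, Complex.exp_re]
    have hre' : (((-(π/d^2) * (n:ℝ)^2 : ℝ) : ℂ) + ((-(2*π*t*(n:ℝ)) : ℝ) : ℂ) * Complex.I).re
        = -(π/d^2) * (n:ℝ)^2 := by
      simp only [Complex.add_re, Complex.ofReal_re, Complex.mul_re, Complex.ofReal_im,
        Complex.I_re, Complex.I_im, mul_zero, mul_one, zero_mul, sub_zero, add_zero]
    have him : (((-(π/d^2) * (n:ℝ)^2 : ℝ) : ℂ) + ((-(2*π*t*(n:ℝ)) : ℝ) : ℂ) * Complex.I).im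
        = -(2*π*t*(n:ℝ)) := by
      simp only [Complex.add_im, Complex.ofReal_im, Complex.mul_im, Complex.ofReal_re,
        Complex.I_re, Complex.I_im, mul_zero, mul_one, zero_mul, add_zero, zero_add]
    rw [hre', him, Real.cos_neg]
    ring_nf
  rw [tsum_congr hterm_re] at hre
  have hre2 : ((d:ℂ) * ((S:ℝ):ℂ)).re = d * S := by simp
  rw [hre2] at hre
  rw [hre]
  field_simp


lemma abs_sin_nat_mul_le (l : ℕ) (θ : ℝ) : |Real.sin ((l:ℝ) * θ)| ≤ (l:ℝ) * |Real.sin θ| := by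
  induction l with
  | zero => simp
  | succ n ih =>
      have h : ((n:ℝ)+1) * θ = (n:ℝ)*θ + θ := by ring
      push_cast
      rw [h, Real.sin_add]
      calc |Real.sin ((n:ℝ)*θ) * Real.cos θ + Real.cos ((n:ℝ)*θ) * Real.sin θ|
          ≤ |Real.sin ((n:ℝ)*θ) * Real.cos θ| + |Real.cos ((n:ℝ)*θ) * Real.sin θ| := abs_add_le _ _
        _ ≤ |Real.sin ((n:ℝ)*θ)| + |Real.sin θ| := by
            rw [abs_mul, abs_mul]
            have h1 := Real.abs_cos_le_one θ
            have h2 := Real.abs_cos_le_one ((n:ℝ)*θ)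
            have h3 := abs_nonneg (Real.sin ((n:ℝ)*θ))
            have h4 := abs_nonneg (Real.sin θ)
            nlinarith
        _ ≤ (n:ℝ) * |Real.sin θ| + |Real.sin θ| := by linarith
        _ = ((n:ℝ)+1) * |Real.sin θ| := by ring

lemma nat_sq_le_four_pow (n : ℕ) : ((n:ℝ)+2)^2 ≤ 4^(n+1) := by
  induction n with
  | zero => norm_num
  | succ n ih =>
      push_cast
      have h4 : (4:ℝ)^(n+1+1) = 4 * 4^(n+1) := by ring
      have hn : (0:ℝ) ≤ (n:ℝ) := Nat.cast_nonneg n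
      push_cast at ih
      calc ((n:ℝ)+1+2)^2 ≤ 4 * ((n:ℝ)+2)^2 := by nlinarith
        _ ≤ 4 * 4^(n+1) := by linarith
        _ = 4^(n+1+1) := by ring

set_option maxHeartbeats 1000000 in
lemma tail_term_bound {b : ℝ} (hb0 : 0 < b) (t : ℝ) (n : ℕ) :
    -(2*(Real.cos (π*t))^2*(((n:ℝ)+2)^2 * rexp (-b*((n:ℝ)+2)^2)))
      ≤ rexp (-b * ((n:ℝ)+2)^2)
        * (Real.cos (2*π*((n:ℝ)+2)*t) - Real.cos (2*π*((n:ℝ)+2)*(1/2 : ℝ))) := by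
  set C := Real.cos (π*t) with hC
  have hexp_pos := Real.exp_pos (-b*((n:ℝ)+2)^2)
  rcases Nat.even_or_odd (n+2) with ⟨l, hl⟩ | ⟨l, hl⟩
  · -- even : n+2 = 2l
    have hml : ((n:ℝ)+2) = 2*(l:ℝ) := by
      have : (n:ℕ)+2 = 2*l := by omega
      exact_mod_cast congrArg (fun x : ℕ => (x:ℝ)) this
    have hcos1 : Real.cos (2*π*((n:ℝ)+2)*(1/2:ℝ)) = 1 := by
      rw [hml, show 2*π*(2*(l:ℝ))*(1/2:ℝ) = (l:ℝ)*(2*π) by ring]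
      exact Real.cos_nat_mul_two_pi l
    rw [hcos1]
    have hsin : Real.cos (2*π*((n:ℝ)+2)*t) - 1 = -(2 * Real.sin (π*((n:ℝ)+2)*t)^2) := by
      have hid : Real.cos (2*(π*((n:ℝ)+2)*t)) = 1 - 2*Real.sin (π*((n:ℝ)+2)*t)^2 := by
        have hc2 := Real.cos_two_mul (π*((n:ℝ)+2)*t)
        have hs := Real.sin_sq_add_cos_sq (π*((n:ℝ)+2)*t)
        nlinarith
      rw [show 2*π*((n:ℝ)+2)*t = 2*(π*((n:ℝ)+2)*t) by ring, hid]
      ring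
    rw [hsin]
    have hsinbd : Real.sin (π*((n:ℝ)+2)*t)^2 ≤ ((n:ℝ)+2)^2 * C^2 := by
      have harg : π*((n:ℝ)+2)*t = (l:ℝ) * (2*(π*t)) := by rw [hml]; ring
      have hbnd := abs_sin_nat_mul_le l (2*(π*t))
      have hs2 : Real.sin (2*(π*t)) = 2 * Real.sin (π*t) * C := Real.sin_two_mul (π*t)
      have hsin1 : |Real.sin (π*t)| ≤ 1 := Real.abs_sin_le_one _
      have habs : |Real.sin (π*((n:ℝ)+2)*t)| ≤ (l:ℝ) * (2 * |Real.sin (π*t)| * |C|) := by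
        rw [harg]
        refine hbnd.trans (le_of_eq ?_)
        rw [hs2, abs_mul, abs_mul, abs_two]
      have h1 : Real.sin (π*((n:ℝ)+2)*t)^2 ≤ ((l:ℝ) * (2 * |Real.sin (π*t)| * |C|))^2 := by
        rw [← sq_abs (Real.sin (π*((n:ℝ)+2)*t))]
        exact pow_le_pow_left₀ (abs_nonneg _) habs 2
      refine h1.trans ?_
      rw [hml]
      have : ((l:ℝ) * (2 * |Real.sin (π*t)| * |C|))^2
          = 4*(l:ℝ)^2 * (Real.sin (π*t))^2 * C^2 := by
        rw [mul_pow, mul_pow, mul_pow, sq_abs, sq_abs]; ring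
      rw [this]
      have hsq1 : (Real.sin (π*t))^2 ≤ 1 := by
        nlinarith [Real.sin_sq_add_cos_sq (π*t), sq_nonneg (Real.cos (π*t))]
      have hC2 : (0:ℝ) ≤ C^2 := sq_nonneg _
      have hl2 : (0:ℝ) ≤ 4*(l:ℝ)^2 := by positivity
      calc 4*(l:ℝ)^2 * (Real.sin (π*t))^2 * C^2 ≤ 4*(l:ℝ)^2 * 1 * C^2 := by
            exact mul_le_mul_of_nonneg_right (mul_le_mul_of_nonneg_left hsq1 hl2) hC2
        _ = (2*(l:ℝ))^2 * C^2 := by ring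
    calc -(2*C^2*(((n:ℝ)+2)^2 * rexp (-b*((n:ℝ)+2)^2)))
        ≤ -(2 * rexp (-b*((n:ℝ)+2)^2) * Real.sin (π*((n:ℝ)+2)*t)^2) := by
          have := mul_le_mul_of_nonneg_left hsinbd
            (by positivity : (0:ℝ) ≤ 2 * rexp (-b*((n:ℝ)+2)^2))
          nlinarith
      _ = rexp (-b*((n:ℝ)+2)^2) * (-(2*Real.sin (π*((n:ℝ)+2)*t)^2)) := by ring
  · -- odd : n+2 = 2l+1
    have hml : ((n:ℝ)+2) = 2*(l:ℝ)+1 := by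
      have : (n:ℕ)+2 = 2*l+1 := by omega
      exact_mod_cast congrArg (fun x : ℕ => (x:ℝ)) this
    have hcos1 : Real.cos (2*π*((n:ℝ)+2)*(1/2:ℝ)) = -1 := by
      rw [hml, show 2*π*(2*(l:ℝ)+1)*(1/2:ℝ) = (l:ℝ)*(2*π) + π by ring]
      exact Real.cos_nat_mul_two_pi_add_pi l
    rw [hcos1]
    have hcge : -1 ≤ Real.cos (2*π*((n:ℝ)+2)*t) := Real.neg_one_le_cos _
    have hpos : (0:ℝ) ≤ rexp (-b*((n:ℝ)+2)^2) * (Real.cos (2*π*((n:ℝ)+2)*t) - -1) := by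
      apply mul_nonneg (exp_pos _).le
      linarith
    have hneg' : -(2*C^2*(((n:ℝ)+2)^2 * rexp (-b*((n:ℝ)+2)^2))) ≤ 0 := by
      have : 0 ≤ 2*C^2*(((n:ℝ)+2)^2 * rexp (-b*((n:ℝ)+2)^2)) := by positivity
      linarith
    linarith

set_option maxHeartbeats 1000000 in
lemma fourier_ineq {b : ℝ} (hb : 2 ≤ b) (t : ℝ) :
    ∑' m : ℤ, rexp (-b * (m:ℝ)^2) * Real.cos (2*π*(m:ℝ)*(1/2 : ℝ))
      ≤ ∑' m : ℤ, rexp (-b * (m:ℝ)^2) * Real.cos (2*π*(m:ℝ)*t) := by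
  have hb0 : (0:ℝ) < b := by linarith
  have hgauss : Summable (fun m : ℤ => rexp (-b * (m:ℝ)^2)) := by
    have := summable_gauss hb0 0
    simpa using this
  have hsq : ∀ u : ℝ, Summable (fun m : ℤ => rexp (-b * (m:ℝ)^2) * Real.cos (2*π*(m:ℝ)*u)) := by
    intro u
    apply Summable.of_norm
    refine hgauss.of_nonneg_of_le (fun _ => norm_nonneg _) (fun m => ?_)
    rw [norm_mul, Real.norm_eq_abs, Real.norm_eq_abs, Real.abs_exp]
    calc rexp (-b*(m:ℝ)^2) * |Real.cos (2*π*(m:ℝ)*u)| ≤ rexp (-b*(m:ℝ)^2) * 1 :=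
        mul_le_mul_of_nonneg_left (Real.abs_cos_le_one _) (exp_pos _).le
      _ = rexp (-b*(m:ℝ)^2) := mul_one _
  set h : ℤ → ℝ := fun m =>
    rexp (-b * (m:ℝ)^2) * (Real.cos (2*π*(m:ℝ)*t) - Real.cos (2*π*(m:ℝ)*(1/2 : ℝ))) with hh
  have hsummable : Summable h := by
    have := (hsq t).sub (hsq (1/2))
    refine this.congr (fun m => ?_)
    simp only [hh]; ring
  suffices hs : 0 ≤ ∑' m : ℤ, h m by
    have hdiff : ∑' m : ℤ, h m = (∑' m : ℤ, rexp (-b*(m:ℝ)^2) * Real.cos (2*π*(m:ℝ)*t))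
        - ∑' m : ℤ, rexp (-b*(m:ℝ)^2) * Real.cos (2*π*(m:ℝ)*(1/2 : ℝ)) := by
      rw [← Summable.tsum_sub (hsq t) (hsq (1/2))]
      exact tsum_congr (fun m => by simp only [hh]; ring)
    linarith [hdiff ▸ hs]
  have h0 : h 0 = 0 := by simp [hh]
  have heven : ∀ m : ℤ, h (-m) = h m := by
    intro m
    simp only [hh]
    have e1 : ((-m : ℤ) : ℝ) = -(m:ℝ) := by push_cast; ring
    rw [e1]
    rw [show 2*π*(-(m:ℝ))*t = -(2*π*(m:ℝ)*t) by ring,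
        show 2*π*(-(m:ℝ))*(1/2:ℝ) = -(2*π*(m:ℝ)*(1/2:ℝ)) by ring,
        Real.cos_neg, Real.cos_neg, neg_sq]
  have hinj1 : Function.Injective (fun n : ℕ => (n : ℤ) + 1) := fun a b hab => by
    simpa using hab
  have hinj2 : Function.Injective (fun n : ℕ => -((n : ℤ) + 1)) := fun a b hab => by
    simpa using hab
  have hnat : Summable (fun n : ℕ => h ((n:ℤ) + 1)) := hsummable.comp_injective hinj1
  have hneg : Summable (fun n : ℕ => h (-((n:ℤ) + 1))) := hsummable.comp_injective hinj2
  have hsplit := tsum_of_add_one_of_neg_add_one hnat hneg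
  rw [hsplit, h0, add_zero]
  have hnegeq : ∑' n : ℕ, h (-((n:ℤ)+1)) = ∑' n : ℕ, h ((n:ℤ)+1) :=
    tsum_congr (fun n => heven _)
  rw [hnegeq]
  suffices hpos : 0 ≤ ∑' n : ℕ, h ((n:ℤ)+1) by linarith
  -- split off the first term
  have hnat2 : Summable (fun n : ℕ => h ((n:ℤ) + 2)) :=
    hsummable.comp_injective (fun a b hab => by simpa using hab)
  have hsplit2 : ∑' n : ℕ, h ((n:ℤ)+1) = h 1 + ∑' n : ℕ, h ((n:ℤ)+2) := by
    rw [Summable.tsum_eq_zero_add hnat]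
    norm_num
    exact tsum_congr (fun n => by push_cast; ring_nf)
  rw [hsplit2]
  set C := Real.cos (π*t) with hC
  -- value of h 1
  have h1val : h 1 = 2 * rexp (-b) * C^2 := by
    simp only [hh]
    have e1 : 2*π*((1:ℤ):ℝ)*(1/2:ℝ) = π := by push_cast; ring
    have e2 : 2*π*((1:ℤ):ℝ)*t = 2*(π*t) := by push_cast; ring
    rw [e1, e2, Real.cos_pi, Real.cos_two_mul]
    push_cast
    ring_nf
    rfl
  -- termwise lower bound for the tail
  have htail : ∀ n : ℕ, -(2*C^2*(((n:ℝ)+2)^2 * rexp (-b*((n:ℝ)+2)^2))) ≤ h ((n:ℤ)+2) := by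
    intro n
    have hcast : (((n:ℤ)+2 : ℤ) : ℝ) = (n:ℝ)+2 := by push_cast; ring
    simp only [hh, hcast, hC]
    exact tail_term_bound hb0 t n
  -- geometric bound for the tail sum
  set r := 4 * rexp (-3*b) with hr
  have hr0 : (0:ℝ) < r := by positivity
  have hrhalf : r ≤ 1/2 := by
    have hexp : rexp (-3*b) ≤ rexp (-6) := by
      apply Real.exp_le_exp.mpr; linarith
    have h16 : (16:ℝ) ≤ rexp 6 := by
      have h3 : (4:ℝ) ≤ rexp 3 := by
        have := Real.add_one_le_exp (3:ℝ); linarith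
      have h6 : rexp 6 = rexp 3 * rexp 3 := by
        rw [← Real.exp_add]; norm_num
      nlinarith
    have h8 : rexp (-6) ≤ 1/8 := by
      rw [Real.exp_neg]
      have hpos : (0:ℝ) < rexp 6 := Real.exp_pos _
      rw [inv_le_comm₀ hpos (by norm_num : (0:ℝ) < 1/8)]
      calc (1/8 : ℝ)⁻¹ = 8 := by norm_num
        _ ≤ rexp 6 := by linarith
    rw [hr]; linarith
  have hlt1 : r < 1 := by linarith
  have hgeo : Summable (fun n : ℕ => rexp (-b) * r^(n+1)) := by
    apply Summable.mul_left
    exact ((summable_geometric_of_lt_one hr0.le hlt1).mul_right r).congr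
      (fun n => (pow_succ r n).symm)
  have hcomp : ∀ n : ℕ, ((n:ℝ)+2)^2 * rexp (-b*((n:ℝ)+2)^2) ≤ rexp (-b) * r^(n+1) := by
    intro n
    have h1 : ((n:ℝ)+2)^2 ≤ 4^(n+1) := nat_sq_le_four_pow n
    have h2 : rexp (-b*((n:ℝ)+2)^2) ≤ rexp (-b) * rexp (-3*b)^(n+1) := by
      rw [← Real.exp_nat_mul, ← Real.exp_add]
      apply Real.exp_le_exp.mpr
      have hn : (0:ℝ) ≤ (n:ℝ) := Nat.cast_nonneg n
      push_cast
      nlinarith [mul_nonneg hb0.le (show (0:ℝ) ≤ (n:ℝ)^2+(n:ℝ) by positivity)]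
    calc ((n:ℝ)+2)^2 * rexp (-b*((n:ℝ)+2)^2)
        ≤ (4:ℝ)^(n+1) * (rexp (-b) * rexp (-3*b)^(n+1)) := by
          apply mul_le_mul h1 h2 (exp_pos _).le (by positivity)
      _ = rexp (-b) * r^(n+1) := by rw [hr, mul_pow]; ring
  have hsum_tail : Summable (fun n : ℕ => ((n:ℝ)+2)^2 * rexp (-b*((n:ℝ)+2)^2)) :=
    Summable.of_nonneg_of_le (fun n => by positivity) hcomp hgeo
  have htailsum : ∑' n : ℕ, ((n:ℝ)+2)^2 * rexp (-b*((n:ℝ)+2)^2) ≤ rexp (-b) := by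
    have h1 := Summable.tsum_le_tsum hcomp hsum_tail hgeo
    have h2 : ∑' n : ℕ, rexp (-b) * r^(n+1) = rexp (-b) * (r * (1-r)⁻¹) := by
      rw [tsum_mul_left]
      congr 1
      have he : ∀ n : ℕ, r^(n+1) = r * r^n := fun n => by rw [pow_succ]; ring
      rw [tsum_congr he, tsum_mul_left, tsum_geometric_of_lt_one hr0.le hlt1]
    rw [h2] at h1
    refine h1.trans ?_
    have h3 : r * (1-r)⁻¹ ≤ 1 := by
      rw [← div_eq_mul_inv, div_le_one (by linarith)]
      linarith
    nlinarith [Real.exp_pos (-b)]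
  have hmin : Summable (fun n : ℕ => -(2*C^2*(((n:ℝ)+2)^2 * rexp (-b*((n:ℝ)+2)^2)))) :=
    (hsum_tail.mul_left (2*C^2)).neg
  have hge := Summable.tsum_le_tsum htail hmin hnat2
  have heq : ∑' n : ℕ, -(2*C^2*(((n:ℝ)+2)^2 * rexp (-b*((n:ℝ)+2)^2)))
      = -(2*C^2 * ∑' n : ℕ, ((n:ℝ)+2)^2 * rexp (-b*((n:ℝ)+2)^2)) := by
    rw [tsum_neg, tsum_mul_left]
  rw [heq] at hge
  have hC2 : (0:ℝ) ≤ 2*C^2 := by positivity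
  have hfin : -(2*C^2*rexp (-b)) ≤ ∑' n : ℕ, h ((n:ℤ)+2) := by
    refine le_trans ?_ hge
    nlinarith [mul_le_mul_of_nonneg_left htailsum hC2]
  rw [h1val]
  nlinarith [hfin]


lemma oneD {d : ℝ} (hd : 0 < d) (z : ℝ) :
    ∑' k : ℤ, rexp (-π * (d * ((k:ℝ) + 1/2))^2)
      ≤ ∑' k : ℤ, rexp (-π * (d * (k:ℝ) + z)^2) := by
  set t := z / d with ht
  have hL : ∑' k : ℤ, rexp (-π * (d * (k:ℝ) + z)^2)
      = ∑' k : ℤ, rexp (-(π * d^2) * ((k:ℝ) + t)^2) := by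
    refine tsum_congr (fun k => ?_)
    congr 1
    have : d * (k:ℝ) + z = d * ((k:ℝ) + t) := by
      rw [ht]; field_simp
    rw [this]; ring
  have hR : ∑' k : ℤ, rexp (-π * (d * ((k:ℝ) + 1/2))^2)
      = ∑' k : ℤ, rexp (-(π * d^2) * ((k:ℝ) + 1/2)^2) := by
    refine tsum_congr (fun k => ?_); congr 1; ring
  rw [hL, hR]
  rcases le_total 4 (π * d^2) with hc | hc
  · -- spatial regime
    set δ := t - (⌊t⌋ : ℝ) - 1/2 with hδdef
    have hδ : |δ| ≤ 1/2 := by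
      have h1 := Int.fract_nonneg t
      have h2 := Int.fract_lt_one t
      rw [Int.fract] at h1 h2
      rw [abs_le]; constructor <;> [linarith; linarith]
    have hre : ∑' k : ℤ, rexp (-(π * d^2) * ((k:ℝ) + t)^2)
        = ∑' k : ℤ, rexp (-(π * d^2) * ((k:ℝ) + (1/2 + δ))^2) := by
      have := (Equiv.addRight (⌊t⌋ : ℤ)).tsum_eq
        (fun k : ℤ => rexp (-(π * d^2) * ((k:ℝ) + (1/2 + δ))^2))
      rw [← this]
      refine tsum_congr (fun k => ?_)
      simp only [Equiv.coe_addRight]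
      congr 2
      push_cast
      rw [hδdef]
      ring
    rw [hre]
    exact spatial hc hδ
  · -- Fourier regime
    rw [poisson hd t, poisson hd (1/2)]
    have hb : 2 ≤ π / d^2 := by
      have hπ : (3:ℝ) ≤ π := by
        have := Real.pi_gt_three; linarith
      have hd2 : (0:ℝ) < d^2 := by positivity
      rw [le_div_iff₀ hd2]
      nlinarith
    have := fourier_ineq hb t
    have hπd : 0 < 1/d := by positivity
    have hmatch : ∀ u : ℝ, ∑' m : ℤ, rexp (-(π/d^2) * (m:ℝ)^2) * Real.cos (2*π*(m:ℝ)*u)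
        = ∑' m : ℤ, rexp (-(π/d^2) * (m:ℝ)^2) * Real.cos (2*π*(m:ℝ)*u) := fun u => rfl
    apply mul_le_mul_of_nonneg_left _ hπd.le
    exact this


def succE (n : ℕ) : (Fin (n+1) → ℤ) ≃ ℤ × (Fin n → ℤ) where
  toFun k := (k 0, fun i => k i.succ)
  invFun p := Fin.cons p.1 p.2
  left_inv k := by
    exact Fin.cons_self_tail k
  right_inv p := by
    simp [Fin.cons_zero, Fin.cons_succ]

set_option maxHeartbeats 1600000 in
lemma hasSum_pi_prod : ∀ (n : ℕ) (f : Fin n → ℤ → ℝ), (∀ i m, 0 ≤ f i m) →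
    (∀ i, Summable (f i)) →
    HasSum (fun k : Fin n → ℤ => ∏ i, f i (k i)) (∏ i, ∑' m : ℤ, f i m) := by
  intro n
  induction n with
  | zero =>
      intro f _ _
      simp only [Finset.univ_eq_empty, Finset.prod_empty]
      exact hasSum_single (f := fun _ : (Fin 0 → ℤ) => (1:ℝ)) default
        (fun b hb => absurd (Subsingleton.elim b default) hb)
  | succ n ih =>
      intro f h0 hs
      have h1 : HasSum (f 0) (∑' m : ℤ, f 0 m) := (hs 0).hasSum
      have h2 := ih (fun i => f i.succ) (fun i m => h0 _ m) (fun i => hs _)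
      have hnn1 : (0 : ℤ → ℝ) ≤ f 0 := fun m => h0 0 m
      have hnn2 : (0 : (Fin n → ℤ) → ℝ) ≤ (fun k : Fin n → ℤ => ∏ i, f i.succ (k i)) :=
        fun k => Finset.prod_nonneg (fun i _ => h0 _ _)
      have hsm := Summable.mul_of_nonneg (hs 0) h2.summable hnn1 hnn2
      have key := h1.mul h2 hsm
      have key2 : HasSum ((fun p : ℤ × (Fin n → ℤ) => f 0 p.1 * ∏ i, f i.succ (p.2 i))
          ∘ (succE n)) ((∑' m : ℤ, f 0 m) * ∏ i : Fin n, ∑' m : ℤ, f i.succ m) :=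
        (Equiv.hasSum_iff (succE n)).mpr key
      have heq : (fun k : Fin (n+1) → ℤ => ∏ i, f i (k i))
          = (fun p : ℤ × (Fin n → ℤ) => f 0 p.1 * ∏ i, f i.succ (p.2 i)) ∘ (succE n) := by
        funext k
        simp only [Function.comp_apply, succE, Equiv.coe_fn_mk]
        rw [Fin.prod_univ_succ]
        rfl
      rw [heq, Fin.prod_univ_succ]
      exact key2

lemma summable_oneD_left {d : ℝ} (hd : 0 < d) (z : ℝ) :
    Summable (fun m : ℤ => rexp (-π * (d * (m:ℝ) + z)^2)) := by
  have := summable_gauss (mul_pos pi_pos (by positivity : (0:ℝ) < d^2)) (z/d)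
  refine this.congr (fun m => ?_)
  congr 1
  have : d * (m:ℝ) + z = d * ((m:ℝ) + z/d) := by field_simp
  rw [this]; ring

lemma summable_oneD_right {d : ℝ} (hd : 0 < d) :
    Summable (fun m : ℤ => rexp (-π * (d * ((m:ℝ) + 1/2))^2)) := by
  have := summable_gauss (mul_pos pi_pos (by positivity : (0:ℝ) < d^2)) (1/2)
  refine this.congr (fun m => ?_)
  congr 1
  ring


end Stmt19Aux

open Stmt19Aux in
/-- for a diagonal matrix `Δ = diag(d₁,…,dₙ)` with positive entries, the
Gaussian periodization `z ↦ ∑_{k∈ℤⁿ} e^{-π|Δk+z|²}` attains its minimum at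
`Δ·(1/2,…,1/2)`, i.e. for every `z ∈ ℝⁿ`,
`∑_{k∈ℤⁿ} e^{-π|Δk+z|²} ≥ ∑_{k∈ℤⁿ} e^{-π|Δ(k+(1/2,…,1/2))|²}`. -/
theorem stmt19 (n : ℕ) (hn : 1 ≤ n) (dg : Fin n → ℝ) (hdg : ∀ i, 0 < dg i)
    (z : Fin n → ℝ) :
    (∑' k : Fin n → ℤ, Real.exp (-π * ∑ i, (dg i * (k i : ℝ) + z i) ^ 2))
      ≥ ∑' k : Fin n → ℤ, Real.exp (-π * ∑ i, (dg i * ((k i : ℝ) + 1 / 2)) ^ 2) := by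
  set f : Fin n → ℤ → ℝ := fun i m => rexp (-π * (dg i * (m:ℝ) + z i)^2) with hf
  set g : Fin n → ℤ → ℝ := fun i m => rexp (-π * (dg i * ((m:ℝ) + 1/2))^2) with hg
  have hexp : ∀ (w : Fin n → ℤ → ℝ) (k : Fin n → ℤ) (a : Fin n → ℝ),
      True := fun _ _ _ => trivial
  have hfL : (∑' k : Fin n → ℤ, Real.exp (-π * ∑ i, (dg i * (k i : ℝ) + z i) ^ 2))
      = ∏ i, ∑' m : ℤ, f i m := by
    have hs := hasSum_pi_prod n f (fun i m => (exp_pos _).le)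
      (fun i => summable_oneD_left (hdg i) (z i))
    rw [← hs.tsum_eq]
    refine tsum_congr (fun k => ?_)
    rw [show -π * ∑ i, (dg i * (k i : ℝ) + z i) ^ 2 = ∑ i, (-π * (dg i * (k i : ℝ) + z i) ^ 2)
        by rw [Finset.mul_sum]]
    rw [Real.exp_sum]
  have hfR : (∑' k : Fin n → ℤ, Real.exp (-π * ∑ i, (dg i * ((k i : ℝ) + 1/2)) ^ 2))
      = ∏ i, ∑' m : ℤ, g i m := by
    have hs := hasSum_pi_prod n g (fun i m => (exp_pos _).le)
      (fun i => summable_oneD_right (hdg i))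
    rw [← hs.tsum_eq]
    refine tsum_congr (fun k => ?_)
    rw [show -π * ∑ i, (dg i * ((k i : ℝ) + 1/2)) ^ 2
        = ∑ i, (-π * (dg i * ((k i : ℝ) + 1/2)) ^ 2) by rw [Finset.mul_sum]]
    rw [Real.exp_sum]
  rw [ge_iff_le, hfL, hfR]
  refine Finset.prod_le_prod (fun i _ => ?_) (fun i _ => ?_)
  · exact tsum_nonneg (fun m => (exp_pos _).le)
  · exact oneD (hdg i) (z i)
end
end
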